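/- For m ≥ 3 and n > 4, the honeycomb toroidal graph HTG(m, n, ℓ) has girth 6, i.e., it contains a 6-cycle and contains no 4-cycle. -/
import Mathlib


/-- The honeycomb toroidal graph `HTG(m, n, l)`: vertices are pairs `(i, j)` with
`i : Fin m` (column index) and `j : ZMod n` (row index, mod n).  Edges are the
vertical edges, the flat edges (between consecutive columns, when `i + j` is odd),
and the jump edges (from column `m-1` to column `0`, with row shift `l`, when
`j` has the same parity as `m`). -/
def HTG (m n l : ℕ) : SimpleGraph (Fin m × ZMod n) :=
  SimpleGraph.fromRel (fun u v =>
    -- vertical edges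
    (u.1 = v.1 ∧ v.2 = u.2 + 1) ∨
    -- flat edges
    ((v.1 : ℕ) = (u.1 : ℕ) + 1 ∧ u.2 = v.2 ∧ Odd ((u.1 : ℕ) + u.2.val)) ∨
    -- jump edges
    ((u.1 : ℕ) = m - 1 ∧ (v.1 : ℕ) = 0 ∧ v.2 = u.2 + (l : ZMod n) ∧ u.2.val % 2 = m % 2))

lemma zmod_add_val {n : ℕ} (hn : 0 < n) (x y : ZMod n) :
    (x + y).val = x.val + y.val ∨ (x + y).val + n = x.val + y.val := by
  haveI : NeZero n := ⟨by omega⟩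
  have h := ZMod.val_add x y
  have hx := ZMod.val_lt x
  have hy := ZMod.val_lt y
  rcases lt_or_ge (x.val + y.val) n with h' | h'
  · left; rw [h, Nat.mod_eq_of_lt h']
  · right
    rw [h, Nat.mod_eq_sub_mod h', Nat.mod_eq_of_lt (by omega)]
    omega

/-- One-directional relation translated to ℕ. -/
def RelN (m n l ui vi uj vj : ℕ) : Prop :=
  (ui = vi ∧ (vj = uj + 1 ∨ (uj + 1 = n ∧ vj = 0))) ∨
  (vi = ui + 1 ∧ uj = vj ∧ (ui + uj) % 2 = 1) ∨
  (ui = m - 1 ∧ vi = 0 ∧ (vj = uj + l ∨ vj + n = uj + l) ∧ uj % 2 = m % 2)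

lemma htg_adj_nat {m n l : ℕ} (hn : 4 < n) (hl : l < n) {u v : Fin m × ZMod n}
    (h : (HTG m n l).Adj u v) :
    RelN m n l (u.1 : ℕ) (v.1 : ℕ) u.2.val v.2.val ∨
    RelN m n l (v.1 : ℕ) (u.1 : ℕ) v.2.val u.2.val := by
  haveI : NeZero n := ⟨by omega⟩
  have hone : (1 : ZMod n).val = 1 := by
    haveI : Fact (1 < n) := ⟨by omega⟩
    exact ZMod.val_one n
  have hlval : ((l : ZMod n)).val = l := ZMod.val_cast_of_lt hl
  rw [HTG, SimpleGraph.fromRel_adj] at h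
  obtain ⟨-, h | h⟩ := h
  · left
    rcases h with ⟨h1, h2⟩ | ⟨h1, h2, h3⟩ | ⟨h1, h2, h3, h4⟩
    · refine Or.inl ⟨by rw [h1], ?_⟩
      have := zmod_add_val (by omega : 0 < n) u.2 1
      rw [← h2, hone] at this
      have h5 := ZMod.val_lt v.2
      have h6 := ZMod.val_lt u.2
      omega
    · exact Or.inr (Or.inl ⟨h1, by rw [h2], Nat.odd_iff.mp h3⟩)
    · refine Or.inr (Or.inr ⟨h1, h2, ?_, h4⟩)
      have := zmod_add_val (by omega : 0 < n) u.2 (l : ZMod n)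
      rw [← h3, hlval] at this
      exact this
  · right
    rcases h with ⟨h1, h2⟩ | ⟨h1, h2, h3⟩ | ⟨h1, h2, h3, h4⟩
    · refine Or.inl ⟨by rw [h1], ?_⟩
      have := zmod_add_val (by omega : 0 < n) v.2 1
      rw [← h2, hone] at this
      have h5 := ZMod.val_lt v.2
      have h6 := ZMod.val_lt u.2
      omega
    · exact Or.inr (Or.inl ⟨h1, by rw [h2], Nat.odd_iff.mp h3⟩)
    · refine Or.inr (Or.inr ⟨h1, h2, ?_, h4⟩)
      have := zmod_add_val (by omega : 0 < n) v.2 (l : ZMod n)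
      rw [← h3, hlval] at this
      exact this


set_option maxHeartbeats 10000000 in
lemma htg_arith_aux (m n l ai bi ci di aj bj cj dj : ℕ)
    (hm : 3 ≤ m) (hn : 4 < n) (hne : n % 2 = 0) (hl : l < n) (hpar : l % 2 = m % 2)
    (Ba : ai < m) (Bb : bi < m) (Bc : ci < m) (Bd : di < m)
    (Ca : aj < n) (Cb : bj < n) (Cc : cj < n) (Cd : dj < n)
    (D1 : bi ≠ di ∨ bj ≠ dj) (D2 : ci ≠ ai ∨ cj ≠ aj)
    (H1 : ((ai = bi ∧ (bj = aj + 1 ∨ (aj + 1 = n ∧ bj = 0))) ∨ (bi = ai + 1 ∧ aj = bj ∧ (ai + aj) % 2 = 1) ∨ (ai = m - 1 ∧ bi = 0 ∧ (bj = aj + l ∨ bj + n = aj + l) ∧ aj % 2 = m % 2)))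
    (H2 : (((bi = ci ∧ (cj = bj + 1 ∨ (bj + 1 = n ∧ cj = 0))) ∨ (ci = bi + 1 ∧ bj = cj ∧ (bi + bj) % 2 = 1) ∨ (bi = m - 1 ∧ ci = 0 ∧ (cj = bj + l ∨ cj + n = bj + l) ∧ bj % 2 = m % 2)) ∨ ((ci = bi ∧ (bj = cj + 1 ∨ (cj + 1 = n ∧ bj = 0))) ∨ (bi = ci + 1 ∧ cj = bj ∧ (ci + cj) % 2 = 1) ∨ (ci = m - 1 ∧ bi = 0 ∧ (bj = cj + l ∨ bj + n = cj + l) ∧ cj % 2 = m % 2))))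
    (H3 : (((ci = di ∧ (dj = cj + 1 ∨ (cj + 1 = n ∧ dj = 0))) ∨ (di = ci + 1 ∧ cj = dj ∧ (ci + cj) % 2 = 1) ∨ (ci = m - 1 ∧ di = 0 ∧ (dj = cj + l ∨ dj + n = cj + l) ∧ cj % 2 = m % 2)) ∨ ((di = ci ∧ (cj = dj + 1 ∨ (dj + 1 = n ∧ cj = 0))) ∨ (ci = di + 1 ∧ dj = cj ∧ (di + dj) % 2 = 1) ∨ (di = m - 1 ∧ ci = 0 ∧ (cj = dj + l ∨ cj + n = dj + l) ∧ dj % 2 = m % 2))))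
    (H4 : (((di = ai ∧ (aj = dj + 1 ∨ (dj + 1 = n ∧ aj = 0))) ∨ (ai = di + 1 ∧ dj = aj ∧ (di + dj) % 2 = 1) ∨ (di = m - 1 ∧ ai = 0 ∧ (aj = dj + l ∨ aj + n = dj + l) ∧ dj % 2 = m % 2)) ∨ ((ai = di ∧ (dj = aj + 1 ∨ (aj + 1 = n ∧ dj = 0))) ∨ (di = ai + 1 ∧ aj = dj ∧ (ai + aj) % 2 = 1) ∨ (ai = m - 1 ∧ di = 0 ∧ (dj = aj + l ∨ dj + n = aj + l) ∧ aj % 2 = m % 2)))) :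
    False := by
  rcases H1 with H1|H1|H1 <;>
  rcases H2 with (H2|H2|H2)|(H2|H2|H2) <;>
  rcases H3 with (H3|H3|H3)|(H3|H3|H3) <;>
  rcases H4 with (H4|H4|H4)|(H4|H4|H4) <;>
  omega

lemma htg_arith (m n l ai bi ci di aj bj cj dj : ℕ)
    (hm : 3 ≤ m) (hn : 4 < n) (hne : n % 2 = 0) (hl : l < n) (hpar : l % 2 = m % 2)
    (Ba : ai < m) (Bb : bi < m) (Bc : ci < m) (Bd : di < m)
    (Ca : aj < n) (Cb : bj < n) (Cc : cj < n) (Cd : dj < n)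
    (D1 : bi ≠ di ∨ bj ≠ dj) (D2 : ci ≠ ai ∨ cj ≠ aj)
    (H1 : (((ai = bi ∧ (bj = aj + 1 ∨ (aj + 1 = n ∧ bj = 0))) ∨ (bi = ai + 1 ∧ aj = bj ∧ (ai + aj) % 2 = 1) ∨ (ai = m - 1 ∧ bi = 0 ∧ (bj = aj + l ∨ bj + n = aj + l) ∧ aj % 2 = m % 2)) ∨ ((bi = ai ∧ (aj = bj + 1 ∨ (bj + 1 = n ∧ aj = 0))) ∨ (ai = bi + 1 ∧ bj = aj ∧ (bi + bj) % 2 = 1) ∨ (bi = m - 1 ∧ ai = 0 ∧ (aj = bj + l ∨ aj + n = bj + l) ∧ bj % 2 = m % 2))))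
    (H2 : (((bi = ci ∧ (cj = bj + 1 ∨ (bj + 1 = n ∧ cj = 0))) ∨ (ci = bi + 1 ∧ bj = cj ∧ (bi + bj) % 2 = 1) ∨ (bi = m - 1 ∧ ci = 0 ∧ (cj = bj + l ∨ cj + n = bj + l) ∧ bj % 2 = m % 2)) ∨ ((ci = bi ∧ (bj = cj + 1 ∨ (cj + 1 = n ∧ bj = 0))) ∨ (bi = ci + 1 ∧ cj = bj ∧ (ci + cj) % 2 = 1) ∨ (ci = m - 1 ∧ bi = 0 ∧ (bj = cj + l ∨ bj + n = cj + l) ∧ cj % 2 = m % 2))))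
    (H3 : (((ci = di ∧ (dj = cj + 1 ∨ (cj + 1 = n ∧ dj = 0))) ∨ (di = ci + 1 ∧ cj = dj ∧ (ci + cj) % 2 = 1) ∨ (ci = m - 1 ∧ di = 0 ∧ (dj = cj + l ∨ dj + n = cj + l) ∧ cj % 2 = m % 2)) ∨ ((di = ci ∧ (cj = dj + 1 ∨ (dj + 1 = n ∧ cj = 0))) ∨ (ci = di + 1 ∧ dj = cj ∧ (di + dj) % 2 = 1) ∨ (di = m - 1 ∧ ci = 0 ∧ (cj = dj + l ∨ cj + n = dj + l) ∧ dj % 2 = m % 2))))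
    (H4 : (((di = ai ∧ (aj = dj + 1 ∨ (dj + 1 = n ∧ aj = 0))) ∨ (ai = di + 1 ∧ dj = aj ∧ (di + dj) % 2 = 1) ∨ (di = m - 1 ∧ ai = 0 ∧ (aj = dj + l ∨ aj + n = dj + l) ∧ dj % 2 = m % 2)) ∨ ((ai = di ∧ (dj = aj + 1 ∨ (aj + 1 = n ∧ dj = 0))) ∨ (di = ai + 1 ∧ aj = dj ∧ (ai + aj) % 2 = 1) ∨ (ai = m - 1 ∧ di = 0 ∧ (dj = aj + l ∨ dj + n = aj + l) ∧ aj % 2 = m % 2)))) :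
    False := by
  rcases H1 with H1 | H1r
  · exact htg_arith_aux m n l ai bi ci di aj bj cj dj hm hn hne hl hpar
      Ba Bb Bc Bd Ca Cb Cc Cd D1 D2 H1 H2 H3 H4
  rcases H2 with H2 | H2r
  · exact htg_arith_aux m n l bi ci di ai bj cj dj aj hm hn hne hl hpar
      Bb Bc Bd Ba Cb Cc Cd Ca D2 (D1.imp Ne.symm Ne.symm) H2 H3 H4 (Or.inr H1r)
  rcases H3 with H3 | H3r
  · exact htg_arith_aux m n l ci di ai bi cj dj aj bj hm hn hne hl hpar
      Bc Bd Ba Bb Cc Cd Ca Cb (D1.imp Ne.symm Ne.symm) (D2.imp Ne.symm Ne.symm)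
      H3 H4 (Or.inr H1r) (Or.inr H2r)
  rcases H4 with H4 | H4r
  · exact htg_arith_aux m n l di ai bi ci dj aj bj cj hm hn hne hl hpar
      Bd Ba Bb Bc Cd Ca Cb Cc (D2.imp Ne.symm Ne.symm) D1 H4 (Or.inr H1r) (Or.inr H2r) (Or.inr H3r)
  · exact htg_arith_aux m n l ai di ci bi aj dj cj bj hm hn hne hl hpar
      Ba Bd Bc Bb Ca Cd Cc Cb (D1.imp Ne.symm Ne.symm) D2 H4r (Or.inl H3r) (Or.inl H2r) (Or.inl H1r)

open SimpleGraph Walk in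
lemma six_cycle (m n l : ℕ) (hm : 3 ≤ m) (hn : 4 < n) :
    ∃ (v : Fin m × ZMod n) (c : (HTG m n l).Walk v v), c.IsCycle ∧ c.length = 6 := by
  haveI : NeZero n := ⟨by omega⟩
  set c0 : Fin m := ⟨0, by omega⟩ with hc0
  set c1 : Fin m := ⟨1, by omega⟩ with hc1
  have v1 : (1 : ZMod n).val = 1 := by
    haveI : Fact (1 < n) := ⟨by omega⟩; exact ZMod.val_one n
  have v2 : (2 : ZMod n).val = 2 := by
    have := ZMod.val_cast_of_lt (show 2 < n by omega); simpa using this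
  have v3 : (3 : ZMod n).val = 3 := by
    have := ZMod.val_cast_of_lt (show 3 < n by omega); simpa using this
  have rne : ∀ x y : ZMod n, x.val ≠ y.val → x ≠ y := fun x y h h' => h (by rw [h'])
  have r12 : (1 : ZMod n) ≠ 2 := rne _ _ (by omega)
  have r13 : (1 : ZMod n) ≠ 3 := rne _ _ (by omega)
  have r23 : (2 : ZMod n) ≠ 3 := rne _ _ (by omega)
  have hcc : c0 ≠ c1 := by simp [hc0, hc1]
  have e21 : (2 : ZMod n) = 1 + 1 := by ring
  have e32 : (3 : ZMod n) = 2 + 1 := by ring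
  -- edges
  have oddfact1 : Odd ((c0 : ℕ) + (1 : ZMod n).val) := by simp [hc0, v1]
  have oddfact3 : Odd ((c0 : ℕ) + (3 : ZMod n).val) := by rw [v3]; simp [hc0]; decide
  have A1 : (HTG m n l).Adj (c0, (1:ZMod n)) (c1, 1) := by
    rw [HTG, SimpleGraph.fromRel_adj]
    exact ⟨by simp [Prod.ext_iff, hcc], Or.inl (Or.inr (Or.inl ⟨by simp [hc0, hc1], rfl, oddfact1⟩))⟩
  have A2 : (HTG m n l).Adj (c1, (1:ZMod n)) (c1, 2) := by
    rw [HTG, SimpleGraph.fromRel_adj]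
    exact ⟨by simp [Prod.ext_iff, r12], Or.inl (Or.inl ⟨rfl, e21⟩)⟩
  have A3 : (HTG m n l).Adj (c1, (2:ZMod n)) (c1, 3) := by
    rw [HTG, SimpleGraph.fromRel_adj]
    exact ⟨by simp [Prod.ext_iff, r23], Or.inl (Or.inl ⟨rfl, e32⟩)⟩
  have A4 : (HTG m n l).Adj (c1, (3:ZMod n)) (c0, 3) := by
    rw [HTG, SimpleGraph.fromRel_adj]
    exact ⟨by simp [Prod.ext_iff, hcc.symm], Or.inr (Or.inr (Or.inl ⟨by simp [hc0, hc1], rfl, oddfact3⟩))⟩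
  have A5 : (HTG m n l).Adj (c0, (3:ZMod n)) (c0, 2) := by
    rw [HTG, SimpleGraph.fromRel_adj]
    exact ⟨by simp [Prod.ext_iff, r23.symm], Or.inr (Or.inl ⟨rfl, e32⟩)⟩
  have A6 : (HTG m n l).Adj (c0, (2:ZMod n)) (c0, 1) := by
    rw [HTG, SimpleGraph.fromRel_adj]
    exact ⟨by simp [Prod.ext_iff, r12.symm], Or.inr (Or.inl ⟨rfl, e21⟩)⟩
  refine ⟨(c0, 1), .cons A1 (.cons A2 (.cons A3 (.cons A4 (.cons A5 (.cons A6 .nil))))), ?_, rfl⟩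
  rw [SimpleGraph.Walk.isCycle_def]
  refine ⟨?_, by simp, ?_⟩
  · rw [SimpleGraph.Walk.isTrail_def]
    simp [Prod.ext_iff, hcc, hcc.symm, r12, r13, r23, r12.symm, r13.symm, r23.symm, Sym2.eq_iff]
  · simp [Prod.ext_iff, hcc, hcc.symm, r12, r13, r23, r12.symm, r13.symm, r23.symm]

open SimpleGraph Walk in
lemma no_four (m n l : ℕ) (hm : 3 ≤ m) (hn : 4 < n) (hne : Even n)
    (hl : l < n) (hpar : l % 2 = m % 2) :
    ¬ ∃ (v : Fin m × ZMod n) (c : (HTG m n l).Walk v v), c.IsCycle ∧ c.length = 4 := by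
  haveI : NeZero n := ⟨by omega⟩
  rintro ⟨v, c, hc, h4⟩
  cases c with
  | nil => simp at h4
  | cons e1 p =>
  cases p with
  | nil => simp at h4
  | cons e2 p =>
  cases p with
  | nil => simp at h4
  | cons e3 p =>
  cases p with
  | nil => simp at h4
  | cons e4 p =>
  cases p with
  | cons e5 p => simp [Walk.length_cons] at h4
  | nil =>
  have hnd := hc.2
  simp [List.nodup_cons] at hnd
  have H1 := htg_adj_nat hn hl e1
  have H2 := htg_adj_nat hn hl e2
  have H3 := htg_adj_nat hn hl e3
  have H4 := htg_adj_nat hn hl e4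
  rename_i b cc d
  obtain ⟨⟨-, hbd, -⟩, ⟨-, hca⟩, -⟩ := hnd
  have key : ∀ x y : Fin m × ZMod n, x ≠ y → (x.1:ℕ) ≠ (y.1:ℕ) ∨ x.2.val ≠ y.2.val := by
    intro x y hxy
    by_contra hcon
    push_neg at hcon
    exact hxy (Prod.ext (Fin.val_injective hcon.1) (ZMod.val_injective n hcon.2))
  unfold RelN at H1 H2 H3 H4
  exact htg_arith m n l (v.1:ℕ) (b.1:ℕ) (cc.1:ℕ) (d.1:ℕ) v.2.val b.2.val cc.2.val d.2.val
    hm hn (Nat.even_iff.mp hne) hl hpar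
    v.1.is_lt b.1.is_lt cc.1.is_lt d.1.is_lt
    (ZMod.val_lt v.2) (ZMod.val_lt b.2) (ZMod.val_lt cc.2) (ZMod.val_lt d.2)
    (key _ _ hbd) (key _ _ hca) H1 H2 H3 H4


/-- For `m ≥ 3` and `n > 4`, the graph `HTG(m, n, l)` has girth 6: it contains a 6-cycle
and contains no 4-cycle. -/
theorem htg_girth_six (m n l : ℕ) (hm : 3 ≤ m) (hn : 4 < n) (hne : Even n)
    (hl : l < n) (hpar : l % 2 = m % 2) :
    (∃ (v : Fin m × ZMod n) (c : (HTG m n l).Walk v v), c.IsCycle ∧ c.length = 6) ∧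
    ¬ ∃ (v : Fin m × ZMod n) (c : (HTG m n l).Walk v v), c.IsCycle ∧ c.length = 4 :=
  ⟨six_cycle m n l hm hn, no_four m n l hm hn hne hl hpar⟩
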